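/- Let g : I → ℝ³ be a smooth unit speed space-like curve on H² (⟨g,g⟩ = −1, ⟨g',g'⟩ = 1) with geodesic curvature κ_g. Let a > 0 and ξ₂ ∈ ℝ be constants, assume tanh(ξ₂)·κ_g(v) < 1 for all v, and define γ(v) = a·∫₀ᵛ g(t)dt + a·tanh(ξ₂)·∫₀ᵛ g(t) × g'(t) dt. Then γ'(v) is time-like with ⟨γ'(v), γ'(v)⟩ = −a²/cosh²(ξ₂), and the curvature and torsion of γ, defined by κ(v) = ‖γ'(v) × γ''(v)‖ / (−⟨γ'(v), γ'(v)⟩)^{3/2} and τ(v) = det(γ'(v), γ''(v), γ'''(v)) / ‖γ'(v) × γ''(v)‖², are given by κ(v) = cosh²(ξ₂)·(1 − tanh(ξ₂)·κ_g(v))/a and τ(v) = cosh²(ξ₂)·(κ_g(v) − tanh(ξ₂))/a. -/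

import Mathlib

noncomputable section

open Real
open scoped ContDiff

/-- The Lorentzian (Minkowski) inner product on ℝ³: ⟨x,y⟩ = x₁y₁ + x₂y₂ − x₃y₃. -/
def mink (x y : Fin 3 → ℝ) : ℝ := x 0 * y 0 + x 1 * y 1 - x 2 * y 2

/-- The Lorentzian cross product on ℝ³:
x × y = (x₂y₃ − x₃y₂, x₃y₁ − x₁y₃, x₂y₁ − x₁y₂). -/
def mcross (x y : Fin 3 → ℝ) : Fin 3 → ℝ :=
  ![x 1 * y 2 - x 2 * y 1, x 2 * y 0 - x 0 * y 2, x 1 * y 0 - x 0 * y 1]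

/-- Determinant of three vectors in ℝ³ (as the rows of a 3×3 matrix). -/
def mdet (x y z : Fin 3 → ℝ) : ℝ := Matrix.det (Matrix.of ![x, y, z])

/-- The pseudo norm ‖x‖ = √|⟨x,x⟩|. -/
def mnorm (x : Fin 3 → ℝ) : ℝ := Real.sqrt |mink x x|

lemma mink_symm (x y : Fin 3 → ℝ) : mink x y = mink y x := by simp [mink]; ring

lemma lagrange (x y z w : Fin 3 → ℝ) :
    mink (mcross x y) (mcross z w) = mink x w * mink y z - mink x z * mink y w := by
  simp [mink, mcross]; ring

lemma mdet_cross (x y z : Fin 3 → ℝ) : mdet x y z = mink (mcross x y) z := by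
  simp only [mdet, mink, mcross, Matrix.det_fin_three, Matrix.of_apply, Matrix.cons_val_zero, Matrix.cons_val_one, Matrix.head_cons, Matrix.cons_val_two, Matrix.tail_cons]; ring

lemma mdet_cross' (x y z : Fin 3 → ℝ) : mink x (mcross y z) = mdet x y z := by
  simp only [mdet, mink, mcross, Matrix.det_fin_three, Matrix.of_apply, Matrix.cons_val_zero, Matrix.cons_val_one, Matrix.head_cons, Matrix.cons_val_two, Matrix.tail_cons]; ring

lemma mdet_xyx (x y : Fin 3 → ℝ) : mdet x y x = 0 := by
  simp only [mdet, Matrix.det_fin_three, Matrix.of_apply, Matrix.cons_val_zero, Matrix.cons_val_one, Matrix.head_cons, Matrix.cons_val_two, Matrix.tail_cons]; ring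

lemma mdet_xxy (x y : Fin 3 → ℝ) : mdet x x y = 0 := by
  simp only [mdet, Matrix.det_fin_three, Matrix.of_apply, Matrix.cons_val_zero, Matrix.cons_val_one, Matrix.head_cons, Matrix.cons_val_two, Matrix.tail_cons]; ring

lemma mdet_xyy (x y : Fin 3 → ℝ) : mdet x y y = 0 := by
  simp only [mdet, Matrix.det_fin_three, Matrix.of_apply, Matrix.cons_val_zero, Matrix.cons_val_one, Matrix.head_cons, Matrix.cons_val_two, Matrix.tail_cons]; ring

lemma mdet_swap (x y z : Fin 3 → ℝ) : mdet y x z = - mdet x y z := by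
  simp only [mdet, Matrix.det_fin_three, Matrix.of_apply, Matrix.cons_val_zero, Matrix.cons_val_one, Matrix.head_cons, Matrix.cons_val_two, Matrix.tail_cons]; ring

lemma gram2 (x y z d e f : Fin 3 → ℝ) :
    mdet x y z * mdet d e f =
      -(mink x d * (mink y e * mink z f - mink y f * mink z e)
        - mink x e * (mink y d * mink z f - mink y f * mink z d)
        + mink x f * (mink y d * mink z e - mink y e * mink z d)) := by
  simp only [mdet, mink, Matrix.det_fin_three, Matrix.of_apply, Matrix.cons_val_zero, Matrix.cons_val_one, Matrix.head_cons, Matrix.cons_val_two, Matrix.tail_cons]; ring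

lemma mcross_self (x : Fin 3 → ℝ) : mcross x x = 0 := by
  funext i; fin_cases i <;> simp [mcross] <;> ring

lemma mink_left3 (a b c : ℝ) (x y z w : Fin 3 → ℝ) :
    mink (a • x + b • y + c • z) w = a * mink x w + b * mink y w + c * mink z w := by
  simp [mink]; ring

lemma mink3 (a b c : ℝ) (x y z : Fin 3 → ℝ) :
    mink (a • x + b • y + c • z) (a • x + b • y + c • z) =
      a^2 * mink x x + b^2 * mink y y + c^2 * mink z z
      + a*b*(mink x y + mink y x) + a*c*(mink x z + mink z x) + b*c*(mink y z + mink z y) := by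
  simp [mink]; ring

lemma mink_right3 (a b : ℝ) (x y w z : Fin 3 → ℝ) :
    mink z (a • x + b • (y + w)) = a * mink z x + b * mink z y + b * mink z w := by
  simp [mink]; ring

lemma mink_left (a b : ℝ) (x y z : Fin 3 → ℝ) :
    mink (a • x + b • y) z = a * mink x z + b * mink y z := by
  simp [mink]; ring

lemma mink_right (a b : ℝ) (x y z : Fin 3 → ℝ) :
    mink z (a • x + b • y) = a * mink z x + b * mink z y := by
  simp [mink]; ring

lemma cross_expand (Aa Bb : ℝ) (p q r : Fin 3 → ℝ) :
    mcross (Aa • p + Bb • mcross p q) (Aa • q + Bb • mcross p r) =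
      (Aa^2) • mcross p q
      + (Aa*Bb) • (mink p p • r - mink p r • p)
      + (Aa*Bb) • (mink q q • p - mink q p • q)
      + (Bb^2) • (mink (mcross p q) p • r - mink (mcross p q) r • p) := by
  funext i; fin_cases i <;>
    (simp [mcross, mink, Pi.add_apply, Pi.sub_apply, Pi.smul_apply, smul_eq_mul,
      Matrix.vecHead, Matrix.vecTail]; ring)

lemma hasDerivAt_mcross {x y : ℝ → Fin 3 → ℝ} {x' y' : Fin 3 → ℝ} {v : ℝ}
    (hx : HasDerivAt x x' v) (hy : HasDerivAt y y' v) :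
    HasDerivAt (fun w => mcross (x w) (y w)) (mcross x' (y v) + mcross (x v) y') v := by
  rw [hasDerivAt_pi] at hx hy ⊢
  intro i
  have h0x := hx 0; have h1x := hx 1; have h2x := hx 2
  have h0y := hy 0; have h1y := hy 1; have h2y := hy 2
  fin_cases i
  · convert (h1x.mul h2y).sub (h2x.mul h1y) using 1
    · rfl
    simp [mcross]; ring
  · convert (h2x.mul h0y).sub (h0x.mul h2y) using 1
    · rfl
    simp [mcross]; ring
  · convert (h1x.mul h0y).sub (h0x.mul h1y) using 1
    · rfl
    simp [mcross]; ring

lemma hasDerivAt_mink {x y : ℝ → Fin 3 → ℝ} {x' y' : Fin 3 → ℝ} {v : ℝ}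
    (hx : HasDerivAt x x' v) (hy : HasDerivAt y y' v) :
    HasDerivAt (fun w => mink (x w) (y w)) (mink x' (y v) + mink (x v) y') v := by
  rw [hasDerivAt_pi] at hx hy
  have h0x := hx 0; have h1x := hx 1; have h2x := hx 2
  have h0y := hy 0; have h1y := hy 1; have h2y := hy 2
  convert (((h0x.mul h0y).add (h1x.mul h1y)).sub (h2x.mul h2y)) using 1
  · rfl
  · rfl
  · rfl
  simp [mink]; ring

lemma const_on_open {S : Set ℝ} (hS : IsOpen S) {φ φ' : ℝ → ℝ}
    (hφ : ∀ w, HasDerivAt φ (φ' w) w) {c : ℝ} (h : ∀ w ∈ S, φ w = c) :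
    ∀ v ∈ S, φ' v = 0 := by
  intro v hv
  have h1 : φ =ᶠ[nhds v] fun _ => c := Filter.eventuallyEq_of_mem (hS.mem_nhds hv) h
  have h2 := h1.deriv_eq
  rw [(hφ v).deriv, deriv_const] at h2
  exact h2


/-- for a unit speed space-like curve g on H² and
γ(v) = a·∫₀ᵛ g + a·tanh ξ₂·∫₀ᵛ g × g', the velocity γ' is time-like with
⟨γ', γ'⟩ = −a²/cosh² ξ₂, and κ = cosh² ξ₂·(1 − tanh ξ₂·κ_g)/a,
τ = cosh² ξ₂·(κ_g − tanh ξ₂)/a. -/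
theorem hyperbolic_bertrand_curvature_torsion
    (a b : ℝ) (I : Set ℝ) (hI : I = Set.Ioo a b) (h0 : (0:ℝ) ∈ I)
    (g : ℝ → Fin 3 → ℝ) (hg : ContDiff ℝ (⊤ : ℕ∞) g)
    (hg1 : ∀ v ∈ I, mink (g v) (g v) = -1)
    (hg2 : ∀ v ∈ I, mink (deriv g v) (deriv g v) = 1)
    (κg : ℝ → ℝ) (hκg : ∀ v, κg v = mdet (g v) (deriv g v) (deriv (deriv g) v))
    (A ξ : ℝ) (hA : 0 < A)
    (hξκ : ∀ v ∈ I, Real.tanh ξ * κg v < 1)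
    (γ : ℝ → Fin 3 → ℝ)
    (hγ : ∀ v, γ v = A • (∫ w in (0:ℝ)..v, g w) +
        (A * Real.tanh ξ) • (∫ w in (0:ℝ)..v, mcross (g w) (deriv g w)))
    (κ τ : ℝ → ℝ)
    (hκdef : ∀ v, κ v = mnorm (mcross (deriv γ v) (deriv (deriv γ) v)) /
        (-(mink (deriv γ v) (deriv γ v))) ^ (3/2 : ℝ))
    (hτdef : ∀ v, τ v =
        mdet (deriv γ v) (deriv (deriv γ) v) (deriv (deriv (deriv γ)) v) /
        (mnorm (mcross (deriv γ v) (deriv (deriv γ) v))) ^ 2)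
    :
    ∀ v ∈ I,
      mink (deriv γ v) (deriv γ v) = -(A ^ 2 / Real.cosh ξ ^ 2) ∧
      κ v = Real.cosh ξ ^ 2 * (1 - Real.tanh ξ * κg v) / A ∧
      τ v = Real.cosh ξ ^ 2 * (κg v - Real.tanh ξ) / A := by
  -- smoothness facts
  have hsm : ContDiff ℝ ∞ g := hg.of_le (by simp)
  have hs1 : ContDiff ℝ ∞ (deriv g) := (contDiff_infty_iff_deriv.mp hsm).2
  have hs2 : ContDiff ℝ ∞ (deriv (deriv g)) := (contDiff_infty_iff_deriv.mp hs1).2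
  have hone : (1 : WithTop ℕ∞) ≤ ∞ := by exact_mod_cast le_top
  have hDg : ∀ v, HasDerivAt g (deriv g v) v := fun v => (hg.differentiable (by simp) v).hasDerivAt
  have hDg1 : ∀ v, HasDerivAt (deriv g) (deriv (deriv g) v) v :=
    fun v => (hs1.differentiable (by simp) v).hasDerivAt
  have hDg2 : ∀ v, HasDerivAt (deriv (deriv g)) (deriv (deriv (deriv g)) v) v :=
    fun v => (hs2.differentiable (by simp) v).hasDerivAt
  have hgc : Continuous g := hg.continuous
  have hcc : Continuous fun w => mcross (g w) (deriv g w) := by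
    have h1 : Continuous (deriv g) := hs1.continuous
    apply continuous_pi; intro i; fin_cases i <;>
      · simp only [mcross, Matrix.cons_val_zero, Matrix.cons_val_one, Matrix.head_cons,
          Matrix.cons_val_two, Matrix.tail_cons, Fin.zero_eta, Fin.mk_one, Fin.isValue, Fin.reduceFinMk]
        fun_prop
  -- first derivative of γ
  have hγd1 : ∀ v, HasDerivAt γ
      (A • g v + (A * Real.tanh ξ) • mcross (g v) (deriv g v)) v := by
    intro v
    have h1 : HasDerivAt (fun u => ∫ w in (0:ℝ)..u, g w) (g v) v :=
      intervalIntegral.integral_hasDerivAt_right (hgc.intervalIntegrable _ _)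
        (hgc.stronglyMeasurableAtFilter _ _) hgc.continuousAt
    have h2 : HasDerivAt (fun u => ∫ w in (0:ℝ)..u, mcross (g w) (deriv g w))
        (mcross (g v) (deriv g v)) v :=
      intervalIntegral.integral_hasDerivAt_right (hcc.intervalIntegrable _ _)
        (hcc.stronglyMeasurableAtFilter _ _) hcc.continuousAt
    exact ((h1.const_smul A).add (h2.const_smul (A * Real.tanh ξ))).congr_of_eventuallyEq
      (Filter.Eventually.of_forall fun w => hγ w)
  have hdγ : deriv γ = fun v => A • g v + (A * Real.tanh ξ) • mcross (g v) (deriv g v) :=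
    funext fun v => (hγd1 v).deriv
  -- second derivative
  have hγd2 : ∀ v, HasDerivAt (fun w => A • g w + (A * Real.tanh ξ) • mcross (g w) (deriv g w))
      (A • deriv g v + (A * Real.tanh ξ) • mcross (g v) (deriv (deriv g) v)) v := by
    intro v
    have h := ((hDg v).const_smul A).add
      ((hasDerivAt_mcross (hDg v) (hDg1 v)).const_smul (A * Real.tanh ξ))
    rw [mcross_self, zero_add] at h
    exact h
  have hddγ : deriv (deriv γ) =
      fun v => A • deriv g v + (A * Real.tanh ξ) • mcross (g v) (deriv (deriv g) v) := by
    rw [hdγ]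
    exact funext fun v => (hγd2 v).deriv
  -- third derivative
  have hγd3 : ∀ v, HasDerivAt
      (fun w => A • deriv g w + (A * Real.tanh ξ) • mcross (g w) (deriv (deriv g) w))
      (A • deriv (deriv g) v + (A * Real.tanh ξ) •
        (mcross (deriv g v) (deriv (deriv g) v) + mcross (g v) (deriv (deriv (deriv g)) v))) v :=
    fun v => ((hDg1 v).const_smul A).add
      ((hasDerivAt_mcross (hDg v) (hDg2 v)).const_smul (A * Real.tanh ξ))
  have hdddγ : deriv (deriv (deriv γ)) =
      fun v => A • deriv (deriv g) v + (A * Real.tanh ξ) •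
        (mcross (deriv g v) (deriv (deriv g) v) + mcross (g v) (deriv (deriv (deriv g)) v)) := by
    rw [hddγ]
    exact funext fun v => (hγd3 v).deriv
  -- differentiated constraints
  subst hI
  have c3 : ∀ v ∈ Set.Ioo a b, mink (g v) (deriv g v) = 0 := by
    have hd := const_on_open isOpen_Ioo (fun w => hasDerivAt_mink (hDg w) (hDg w)) hg1
    intro v hv
    have h := hd v hv
    have hs := mink_symm (deriv g v) (g v)
    linarith
  have c4 : ∀ v ∈ Set.Ioo a b, mink (g v) (deriv (deriv g) v) = -1 := by
    have hd := const_on_open isOpen_Ioo (fun w => hasDerivAt_mink (hDg w) (hDg1 w)) c3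
    intro v hv
    have h := hd v hv
    have h2 := hg2 v hv
    linarith
  have c5 : ∀ v ∈ Set.Ioo a b, mink (deriv g v) (deriv (deriv g) v) = 0 := by
    have hd := const_on_open isOpen_Ioo (fun w => hasDerivAt_mink (hDg1 w) (hDg1 w)) hg2
    intro v hv
    have h := hd v hv
    have hs := mink_symm (deriv (deriv g) v) (deriv g v)
    linarith
  have c6 : ∀ v ∈ Set.Ioo a b, mink (g v) (deriv (deriv (deriv g)) v) = 0 := by
    have hd := const_on_open isOpen_Ioo (fun w => hasDerivAt_mink (hDg w) (hDg2 w)) c4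
    intro v hv
    have h := hd v hv
    have h5 := c5 v hv
    have hs := mink_symm (deriv g v) (deriv (deriv g) v)
    linarith
  have c7 : ∀ v ∈ Set.Ioo a b, mink (deriv (deriv g) v) (deriv (deriv g) v)
      + mink (deriv g v) (deriv (deriv (deriv g)) v) = 0 := by
    have hd := const_on_open isOpen_Ioo (fun w => hasDerivAt_mink (hDg1 w) (hDg2 w)) c5
    intro v hv
    exact hd v hv
  -- global scalar facts
  have hc : (0:ℝ) < Real.cosh ξ := Real.cosh_pos ξ
  have hcn : Real.cosh ξ ≠ 0 := ne_of_gt hc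
  have hAn : A ≠ 0 := ne_of_gt hA
  have ht2 : 1 - Real.tanh ξ ^ 2 = 1 / Real.cosh ξ ^ 2 := by
    rw [Real.tanh_eq_sinh_div_cosh]
    field_simp
    exact Real.cosh_sq_sub_sinh_sq ξ
  -- main pointwise computation
  intro v hv
  have h1 := hg1 v hv
  have h2 := hg2 v hv
  have h3 := c3 v hv
  have h4 := c4 v hv
  have h5 := c5 v hv
  have h6 := c6 v hv
  have h7 := c7 v hv
  set p := g v with hp
  set q := deriv g v with hq
  set r := deriv (deriv g) v with hr
  set s := deriv (deriv (deriv g)) v with hs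
  set t : ℝ := Real.tanh ξ with htdef
  set k : ℝ := κg v with hkdef
  have hk : mdet p q r = k := (hκg v).symm
  have hqp : mink q p = 0 := (mink_symm q p).trans h3
  have hrp : mink r p = -1 := (mink_symm r p).trans h4
  have hrq : mink r q = 0 := (mink_symm r q).trans h5
  have huu : mink (mcross p q) (mcross p q) = 1 := by
    rw [lagrange, h3, hqp, h1, h2]; ring
  have hup : mink (mcross p q) p = 0 := by rw [← mdet_cross, mdet_xyx]
  have hpu : mink p (mcross p q) = 0 := (mink_symm p (mcross p q)).trans hup
  have huq : mink (mcross p q) q = 0 := by rw [← mdet_cross, mdet_xyy]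
  have hur : mink (mcross p q) r = k := by rw [← mdet_cross, hk]
  have hru : mink r (mcross p q) = k := (mink_symm r (mcross p q)).trans hur
  have hrr : mink r r = k^2 - 1 := by
    have hG := gram2 p q r p q r
    rw [h1, h2, h3, h4, h5, hqp, hrp, hrq, hk] at hG
    linear_combination -hG
  have hqs : mink q s = -(k^2 - 1) := by rw [hrr] at h7; linarith
  have hqw : mink q (mcross p r) = -k := by rw [mdet_cross', mdet_swap, hk]
  have hpw : mink p (mcross p r) = 0 := by rw [mdet_cross', mdet_xxy]
  have huqr : mink (mcross p q) (mcross q r) = -1 := by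
    rw [lagrange, h4, h2, h3, h5]; ring
  have hups : mink (mcross p q) (mcross p s) = -(k^2 - 1) := by
    rw [lagrange, h6, hqp, h1, hqs]; ring
  have hpqr : mink p (mcross q r) = k := by rw [mdet_cross', hk]
  have hpps : mink p (mcross p s) = 0 := by rw [mdet_cross', mdet_xxy]
  have hrqr : mink r (mcross q r) = 0 := by rw [mdet_cross', mdet_xyx]
  have hrps : mink r (mcross p s) = -(k^2 - 1) * k := by
    have huu1 : mdet p q (mcross p q) = 1 := by rw [mdet_cross]; exact huu
    have hG := gram2 p q (mcross p q) r p s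
    rw [huu1, one_mul, h4, hqp, hqs, hup, h1, h5, hur, h6] at hG
    rw [mdet_cross']
    linear_combination hG
  -- derivatives at v, in basis form
  have e1 : deriv γ v = A • p + (A * t) • mcross p q := by
    rw [hdγ]
  have e2 : deriv (deriv γ) v = A • q + (A * t) • mcross p r := by
    rw [hddγ]
  have e3 : deriv (deriv (deriv γ)) v = A • r + (A * t) • (mcross q r + mcross p s) := by
    rw [hdddγ]
  -- statement 1
  have main1 : mink (deriv γ v) (deriv γ v) = -(A^2) + (A*t)^2 := by
    rw [e1, mink_left, mink_right, mink_right, h1, hup, hpu, huu]; ring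
  have htA : A ^ 2 / Real.cosh ξ ^ 2 = A^2 * (1 - t^2) := by
    rw [htdef, ht2]; field_simp
  have st1 : mink (deriv γ v) (deriv γ v) = -(A ^ 2 / Real.cosh ξ ^ 2) := by
    rw [main1, htA]; ring
  refine ⟨st1, ?_, ?_⟩
  · -- curvature
    have hN := cross_expand A (A*t) p q r
    rw [h1, h4, h2, hqp, hup, hur] at hN
    have hN2 : mcross (deriv γ v) (deriv (deriv γ) v) =
        (A^2) • mcross p q + (2*A^2*t - A^2*t^2*k) • p + (-(A^2*t)) • r := by
      rw [e1, e2, hN]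
      funext i; fin_cases i <;>
        (simp only [Pi.add_apply, Pi.sub_apply, Pi.smul_apply, smul_eq_mul]; ring)
    have hpos : 0 < 1 - t*k := by
      have := hξκ v hv
      linarith
    have mNN : mink (mcross (deriv γ v) (deriv (deriv γ) v))
        (mcross (deriv γ v) (deriv (deriv γ) v)) = A^4 * (1 - t^2) * (1 - t*k)^2 := by
      rw [hN2, mink3, huu, h1, hrr, hup, hpu, hur, hru, h4, hrp]
      ring
    have hvalnn : (0:ℝ) ≤ A^2 * (1 - t*k) / Real.cosh ξ := by
      positivity
    have hval : mink (mcross (deriv γ v) (deriv (deriv γ) v))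
        (mcross (deriv γ v) (deriv (deriv γ) v)) = (A^2 * (1 - t*k) / Real.cosh ξ)^2 := by
      rw [mNN]
      have h12 : 1 - t^2 = 1 / Real.cosh ξ ^ 2 := by rw [htdef]; exact ht2
      rw [h12]; field_simp
    have hnorm : mnorm (mcross (deriv γ v) (deriv (deriv γ) v)) =
        A^2 * (1 - t*k) / Real.cosh ξ := by
      rw [mnorm, hval, abs_of_nonneg (sq_nonneg _), Real.sqrt_sq hvalnn]
    have hpow : (A ^ 2 / Real.cosh ξ ^ 2) ^ (3/2 : ℝ) = (A / Real.cosh ξ)^3 := by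
      have hAc : (0:ℝ) < A / Real.cosh ξ := div_pos hA hc
      have he : A ^ 2 / Real.cosh ξ ^ 2 = (A / Real.cosh ξ) ^ (2:ℕ) := by
        field_simp
      rw [he, ← Real.rpow_natCast (A / Real.cosh ξ) 2, ← Real.rpow_mul hAc.le]
      norm_num
    rw [hκdef v, hnorm, st1, neg_neg, hpow]
    field_simp
  · -- torsion
    have hN := cross_expand A (A*t) p q r
    rw [h1, h4, h2, hqp, hup, hur] at hN
    have hN2 : mcross (deriv γ v) (deriv (deriv γ) v) =
        (A^2) • mcross p q + (2*A^2*t - A^2*t^2*k) • p + (-(A^2*t)) • r := by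
      rw [e1, e2, hN]
      funext i; fin_cases i <;>
        (simp only [Pi.add_apply, Pi.sub_apply, Pi.smul_apply, smul_eq_mul]; ring)
    have hpos : 0 < 1 - t*k := by
      have := hξκ v hv
      linarith
    have mNN : mink (mcross (deriv γ v) (deriv (deriv γ) v))
        (mcross (deriv γ v) (deriv (deriv γ) v)) = A^4 * (1 - t^2) * (1 - t*k)^2 := by
      rw [hN2, mink3, huu, h1, hrr, hup, hpu, hur, hru, h4, hrp]
      ring
    have hvalnn : (0:ℝ) ≤ A^2 * (1 - t*k) / Real.cosh ξ := by positivity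
    have hval : mink (mcross (deriv γ v) (deriv (deriv γ) v))
        (mcross (deriv γ v) (deriv (deriv γ) v)) = (A^2 * (1 - t*k) / Real.cosh ξ)^2 := by
      rw [mNN]
      have h12 : 1 - t^2 = 1 / Real.cosh ξ ^ 2 := by rw [htdef]; exact ht2
      rw [h12]; field_simp
    have hnorm : mnorm (mcross (deriv γ v) (deriv (deriv γ) v)) =
        A^2 * (1 - t*k) / Real.cosh ξ := by
      rw [mnorm, hval, abs_of_nonneg (sq_nonneg _), Real.sqrt_sq hvalnn]
    have hdet : mdet (deriv γ v) (deriv (deriv γ) v) (deriv (deriv (deriv γ)) v) =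
        A^3 * (k - t) * (1 - t*k)^2 := by
      rw [mdet_cross, hN2, e3, mink_left3, mink_right3, mink_right3, mink_right3,
        hur, huqr, hups, h4, hpqr, hpps, hrr, hrqr, hrps]
      ring
    have h1tk : (1 : ℝ) - t * k ≠ 0 := by linarith
    rw [hτdef v, hdet, hnorm]
    field_simp
    have h1tk' : (1:ℝ) - k * t ≠ 0 := by rw [mul_comm]; exact h1tk
    field_simp
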